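/- Let ν>1 and let φ_ν and Φ_ν denote the standard Student-t density with ν degrees of freedom and its cumulative distribution function. Then the Student expected improvement factor satisfies, as x → −∞, x·Φ_ν(x) + ((ν + x²)/(ν − 1))·φ_ν(x) = Θ(|x|^{1−ν}); that is, there exist constants 0 < c ≤ C and X > 0 such that for all x ≤ −X, c·|x|^{1−ν} ≤ x·Φ_ν(x) + ((ν + x²)/(ν − 1))·φ_ν(x) ≤ C·|x|^{1−ν}. -/

import Mathlib

open MeasureTheory

/-- The standard Student-t density with `ν` degrees of freedom. -/
noncomputable def tpdf (ν x : ℝ) : ℝ :=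
  Real.Gamma ((ν + 1) / 2) / (Real.sqrt (ν * Real.pi) * Real.Gamma (ν / 2)) *
    (1 + x ^ 2 / ν) ^ (-((ν + 1) / 2))

/-- The cumulative distribution function of the standard Student-t distribution
with `ν` degrees of freedom. -/
noncomputable def tcdf (ν x : ℝ) : ℝ := ∫ t in Set.Iic x, tpdf ν t

/-! Write `φ_ν(x) = A (ν + x²)^(-(ν+1)/2)`. Then `(ν + x²) φ_ν(x) / (ν - 1) = A (ν + x²)^((1-ν)/2) / (ν - 1)`,
which is `|x|^(1-ν) · A / (ν - 1)` up to a factor `1 - O(x⁻²)` by Bernoulli's inequality, while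
integrating `φ_ν(t) ≤ A |t|^(-(ν+1))` gives `0 ≥ x Φ_ν(x) ≥ -(A / ν) |x|^(1-ν)`. Since
`1 / (ν - 1) - 1 / ν = 1 / (ν (ν - 1)) > 0`, the density term dominates once the Bernoulli error
`(ν - 1) ν / (2 x²)` has dropped below `1 / (2ν)`, i.e. for `x² ≥ ν² (ν - 1)`. -/

open Real

theorem one_add_mul_self_le_rpow_one_add_of_nonpos {s : ℝ} (hs : -1 < s) {p : ℝ} (hp : p ≤ 0) :
    1 + p * s ≤ (1 + s) ^ p := by
  have hs' : 0 < 1 + s := by linarith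
  have hlog : log (1 + s) ≤ s := by linarith [log_le_sub_one_of_pos hs']
  rw [rpow_def_of_pos hs']
  nlinarith [add_one_le_exp (log (1 + s) * p)]

theorem rpow_mul_one_add_le_add_rpow {a b p : ℝ} (hb : 0 < b) (hab : 0 < b + a) (hp : p ≤ 0) :
    b ^ p * (1 + p * (a / b)) ≤ (b + a) ^ p := by
  have hsplit : b + a = b * (1 + a / b) := by field_simp
  have has : -1 < a / b := by rw [lt_div_iff₀ hb]; linarith
  rw [hsplit, mul_rpow hb.le (by linarith)]
  exact mul_le_mul_of_nonneg_left (one_add_mul_self_le_rpow_one_add_of_nonpos has hp)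
    (rpow_nonneg hb.le p)

theorem sq_rpow_eq_abs_rpow (x s : ℝ) : (x ^ 2) ^ s = |x| ^ (2 * s) := by
  rw [← sq_abs, ← rpow_natCast, ← rpow_mul (abs_nonneg x)]
  norm_num

theorem add_sq_rpow_bounds {a p x : ℝ} (ha : 0 ≤ a) (hp : p ≤ 0) (hx : x ≠ 0) :
    |x| ^ (2 * p) * (1 + p * (a / x ^ 2)) ≤ (x ^ 2 + a) ^ p ∧ (x ^ 2 + a) ^ p ≤ |x| ^ (2 * p) := by
  have hx2 : 0 < x ^ 2 := by positivity
  rw [← sq_rpow_eq_abs_rpow]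
  exact ⟨rpow_mul_one_add_le_add_rpow hx2 (by linarith) hp,
    rpow_le_rpow_of_nonpos hx2 (by linarith) hp⟩

/-- `φ_ν(x) ∼ tpdfTailConst ν * |x| ^ (-(ν + 1))` as `|x| → ∞`. -/
noncomputable def tpdfTailConst (ν : ℝ) : ℝ :=
  Gamma ((ν + 1) / 2) / (sqrt (ν * π) * Gamma (ν / 2)) * ν ^ ((ν + 1) / 2)

section StudentT

variable {ν : ℝ}

theorem tpdfTailConst_pos (hν : 0 < ν) : 0 < tpdfTailConst ν := by
  unfold tpdfTailConst
  have := Gamma_pos_of_pos (by linarith : 0 < (ν + 1) / 2)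
  have := Gamma_pos_of_pos (by linarith : 0 < ν / 2)
  have := sqrt_pos.mpr (mul_pos hν pi_pos)
  positivity

theorem tpdf_eq_tpdfTailConst_mul (hν : 0 < ν) (x : ℝ) :
    tpdf ν x = tpdfTailConst ν * (ν + x ^ 2) ^ (-((ν + 1) / 2)) := by
  have hsplit : 1 + x ^ 2 / ν = (ν + x ^ 2) / ν := by field_simp
  rw [tpdf, tpdfTailConst, hsplit, div_rpow (by positivity) hν.le, rpow_neg hν.le, div_inv_eq_mul]
  ring

theorem tpdf_nonneg (hν : 0 < ν) (x : ℝ) : 0 ≤ tpdf ν x := by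
  rw [tpdf_eq_tpdfTailConst_mul hν]
  have := tpdfTailConst_pos hν
  positivity

theorem tpdf_le_mul_abs_rpow (hν : 0 < ν) {x : ℝ} (hx : x ≠ 0) :
    tpdf ν x ≤ tpdfTailConst ν * |x| ^ (-(ν + 1)) := by
  rw [tpdf_eq_tpdfTailConst_mul hν, show -(ν + 1) = 2 * (-((ν + 1) / 2)) by ring,
    ← sq_rpow_eq_abs_rpow]
  gcongr ?_ * ?_
  · exact (tpdfTailConst_pos hν).le
  · exact rpow_le_rpow_of_nonpos (by positivity) (by linarith) (by linarith)

theorem tcdf_nonneg (hν : 0 < ν) (x : ℝ) : 0 ≤ tcdf ν x :=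
  setIntegral_nonneg measurableSet_Iic fun t _ => tpdf_nonneg hν t

theorem tcdf_le_div_mul_abs_rpow (hν : 0 < ν) {x : ℝ} (hx : x < 0) :
    tcdf ν x ≤ tpdfTailConst ν / ν * |x| ^ (-ν) := by
  have hexp : -(ν + 1) < -1 := by linarith
  have hmx : 0 < -x := by linarith
  have hint : IntegrableOn (fun t : ℝ => (-t) ^ (-(ν + 1))) (Set.Iic x) :=
    IntegrableOn.comp_neg_Iic (f := fun t : ℝ => t ^ (-(ν + 1)))
      ((integrableOn_Ici_iff_integrableOn_Ioi).mpr (integrableOn_Ioi_rpow_of_lt hexp hmx))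
  have hval : ∫ t in Set.Iic x, (-t) ^ (-(ν + 1)) = |x| ^ (-ν) / ν := by
    rw [integral_comp_neg_Iic x (fun t => t ^ (-(ν + 1))), integral_Ioi_rpow_of_lt hexp hmx,
      abs_of_neg hx, show -(ν + 1) + 1 = -ν by ring, neg_div_neg_eq]
  calc tcdf ν x ≤ ∫ t in Set.Iic x, tpdfTailConst ν * (-t) ^ (-(ν + 1)) := by
        refine setIntegral_mono_of_nonneg (fun t _ => tpdf_nonneg hν t) (fun t ht => ?_)
          (hint.const_mul _)
        have ht : t < 0 := lt_of_le_of_lt ht hx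
        simpa only [abs_of_neg ht] using tpdf_le_mul_abs_rpow hν ht.ne
    _ = tpdfTailConst ν / ν * |x| ^ (-ν) := by rw [integral_const_mul, hval]; ring

theorem neg_div_mul_abs_rpow_le_mul_tcdf (hν : 0 < ν) {x : ℝ} (hx : x < 0) :
    -(tpdfTailConst ν / ν) * |x| ^ (1 - ν) ≤ x * tcdf ν x := by
  have hsplit : |x| ^ (1 - ν) = |x| * |x| ^ (-ν) := by
    rw [sub_eq_add_neg, rpow_add (abs_pos.2 hx.ne), rpow_one]
  calc -(tpdfTailConst ν / ν) * |x| ^ (1 - ν) = -|x| * (tpdfTailConst ν / ν * |x| ^ (-ν)) := by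
        rw [hsplit]; ring
    _ ≤ -|x| * tcdf ν x := mul_le_mul_of_nonpos_left (tcdf_le_div_mul_abs_rpow hν hx) (neg_nonpos.2 (abs_nonneg x))
    _ = x * tcdf ν x := by rw [abs_of_neg hx, neg_neg]

theorem add_sq_mul_tpdf (hν : 0 < ν) (x : ℝ) :
    (ν + x ^ 2) * tpdf ν x = tpdfTailConst ν * (x ^ 2 + ν) ^ ((1 - ν) / 2) := by
  rw [tpdf_eq_tpdfTailConst_mul hν, add_comm (x ^ 2), show (1 - ν) / 2 = 1 + -((ν + 1) / 2) by ring,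
    rpow_add (by positivity), rpow_one]
  ring

end StudentT

/-- For `ν > 1`, the Student expected improvement factor
`x·Φ_ν(x) + ((ν + x²)/(ν − 1))·φ_ν(x)` is `Θ(|x|^{1−ν})` as `x → −∞`:
there exist `0 < c ≤ C` and `X > 0` such that for all `x ≤ −X`,
`c·|x|^{1−ν} ≤ x·Φ_ν(x) + ((ν + x²)/(ν−1))·φ_ν(x) ≤ C·|x|^{1−ν}`. -/
theorem sei_factor_polynomial_tail (ν : ℝ) (hν : 1 < ν) :
    ∃ c C X : ℝ, 0 < c ∧ c ≤ C ∧ 0 < X ∧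
      ∀ x : ℝ, x ≤ -X →
        c * |x| ^ (1 - ν) ≤
            x * tcdf ν x + (ν + x ^ 2) / (ν - 1) * tpdf ν x ∧
        x * tcdf ν x + (ν + x ^ 2) / (ν - 1) * tpdf ν x ≤
            C * |x| ^ (1 - ν) := by
  have hν0 : 0 < ν := by linarith
  have hν1 : 0 < ν - 1 := by linarith
  set A := tpdfTailConst ν
  have hA : 0 < A := tpdfTailConst_pos hν0
  refine ⟨A / (2 * ν * (ν - 1)), A / (ν - 1), ν ^ 2, by positivity,
    div_le_div_of_nonneg_left hA.le hν1 (by nlinarith), by positivity, fun x hx => ?_⟩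
  have hx0 : x < 0 := by nlinarith
  have hxsq : ν ^ 2 * (ν - 1) ≤ x ^ 2 := by nlinarith
  set s := |x| ^ (1 - ν)
  have hs : 0 < s := rpow_pos_of_pos (abs_pos.2 hx0.ne) _
  have hsei : x * tcdf ν x + (ν + x ^ 2) / (ν - 1) * tpdf ν x
      = x * tcdf ν x + A / (ν - 1) * (x ^ 2 + ν) ^ ((1 - ν) / 2) := by
    rw [div_mul_eq_mul_div, add_sq_mul_tpdf hν0]; ring
  obtain ⟨hlow, hupp⟩ := add_sq_rpow_bounds hν0.le (by linarith : (1 - ν) / 2 ≤ 0) hx0.ne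
  rw [show 2 * ((1 - ν) / 2) = 1 - ν by ring] at hlow hupp
  have hcdf_low := neg_div_mul_abs_rpow_le_mul_tcdf hν0 hx0
  have hcdf_upp : x * tcdf ν x ≤ 0 := mul_nonpos_of_nonpos_of_nonneg hx0.le (tcdf_nonneg hν0 x)
  have hsmall : (ν - 1) / 2 * (ν / x ^ 2) ≤ 1 / (2 * ν) := by
    rw [div_mul_div_comm, div_le_div_iff₀ (by nlinarith) (by positivity)]
    nlinarith
  rw [hsei]
  constructor
  · calc A / (2 * ν * (ν - 1)) * s = -(A / ν) * s + A / (ν - 1) * (s * (1 - 1 / (2 * ν))) := by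
          field_simp; ring
      _ ≤ x * tcdf ν x + A / (ν - 1) * (s * (1 + (1 - ν) / 2 * (ν / x ^ 2))) := by gcongr; linarith
      _ ≤ _ := by gcongr
  · calc _ ≤ 0 + A / (ν - 1) * s := by gcongr
      _ = _ := zero_add _
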